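/- For every simplicial complex X with at least one facet, L(X) ≤ M(X), where M(X) is the minimum over all linear orderings σ_1 ≺ ⋯ ≺ σ_m of the facets of X of the quantity M_≺(X) defined by M_≺(X_1) = 1 and M_≺(X_j) = M_≺(X_{j-1}) if X_{j-1} ∩ Δ(σ_j) is a simplex and M_≺(X_j) = M_≺(X_{j-1}) + 1 otherwise, with X_j = ∪_{i=1}^{j} Δ(σ_i). -/

import Mathlib

open Finset

variable {V : Type*} [DecidableEq V] [Fintype V]

/-- An abstract simplicial complex: a finite collection of faces closed under subsets. -/
def IsComplex (X : Finset (Finset V)) : Prop :=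
  ∀ s ∈ X, ∀ t, t ⊆ s → t ∈ X

/-- A collection of faces is a simplex if it is the full power set of some vertex set
(possibly empty). -/
def IsSimplexC (Y : Finset (Finset V)) : Prop := ∃ τ : Finset V, Y = τ.powerset

/-- The induced subcomplex `X[W]`. -/
def indOn (X : Finset (Finset V)) (W : Finset V) : Finset (Finset V) :=
  X.filter (fun s => s ⊆ W)

/-- The `ℤ/2ℤ` boundary of a chain, a chain being recorded as the finite set of faces with
coefficient `1`.  The coefficient of `τ` in `∂ c` is the parity of the number of faces of `c`
covering `τ`.  (This includes the augmentation `∂₀`, with `∅` playing the role of the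
generator of `C₋₁`, so homology is reduced homology.) -/
def bdry (c : Finset (Finset V)) : Finset (Finset V) :=
  Finset.univ.filter (fun τ => Odd (c.filter (fun s => τ ⊆ s ∧ s.card = τ.card + 1)).card)

/-- Sum of chains over `ℤ/2ℤ` (symmetric difference). -/
def chAdd (c d : Finset (Finset V)) : Finset (Finset V) := (c \ d) ∪ (d \ c)

/-- An `n`-dimensional chain of `X` (each face has `n+1` vertices). -/
def IsNChain (X : Finset (Finset V)) (n : ℕ) (c : Finset (Finset V)) : Prop :=
  c ⊆ X ∧ ∀ s ∈ c, s.card = n + 1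

/-- An `n`-cycle of `X` (reduced: `0`-cycles have evenly many vertices). -/
def IsNCycle (X : Finset (Finset V)) (n : ℕ) (c : Finset (Finset V)) : Prop :=
  IsNChain X n c ∧ bdry c = ∅

/-- An `n`-boundary of `X`. -/
def IsNBdry (X : Finset (Finset V)) (n : ℕ) (c : Finset (Finset V)) : Prop :=
  ∃ d, IsNChain X (n + 1) d ∧ bdry d = c

/-- `X` is `d`-Leray: all reduced homology of induced subcomplexes vanishes in
dimensions `≥ d`. -/
def IsLeray (X : Finset (Finset V)) (d : ℕ) : Prop :=
  ∀ W : Finset V, ∀ i : ℕ, d ≤ i → ∀ c,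
    IsNCycle (indOn X W) i c → IsNBdry (indOn X W) i c

/-- The Leray number `L(X)`. -/
noncomputable def lerayNum (X : Finset (Finset V)) : ℕ := sInf {d | IsLeray X d}

/-- The facets (maximal faces) of `X`. -/
def facetsOf (X : Finset (Finset V)) : Finset (Finset V) :=
  X.filter (fun s => ∀ t ∈ X, s ⊆ t → s = t)

/-- `σ 0, …, σ (m-1)` is an enumeration (linear ordering) of the facets of `X`. -/
def IsFacetEnum (X : Finset (Finset V)) (m : ℕ) (σ : ℕ → Finset V) : Prop :=
  (∀ i, i < m → σ i ∈ facetsOf X) ∧ (∀ s ∈ facetsOf X, ∃ i, i < m ∧ σ i = s) ∧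
    (∀ i j, i < m → j < m → σ i = σ j → i = j)

/-- `X_j = ⋃_{i < j} Δ(σ i)`. -/
def cUnion (σ : ℕ → Finset V) (j : ℕ) : Finset (Finset V) :=
  (Finset.range j).biUnion (fun i => (σ i).powerset)

-- `Mval σ j = M_≺(X_{j+1})`: starts at `1`, increases by `1` exactly when the newly
-- attached simplex meets the union of the previous ones in a non-simplex.
open Classical in
noncomputable def Mval (σ : ℕ → Finset V) : ℕ → ℕ
  | 0 => 1
  | (j+1) => Mval σ j + (if IsSimplexC (cUnion σ (j+1) ∩ (σ (j+1)).powerset) then 0 else 1)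

/-- `M(X)`: the minimum of `M_≺(X)` over all facet orderings. -/
noncomputable def Mnum (X : Finset (Finset V)) : ℕ :=
  sInf {k | ∃ m σ, 0 < m ∧ IsFacetEnum X m σ ∧ k = Mval σ (m - 1)}

/-- The facet ordering `σ 0 ≺ ⋯ ≺ σ (m-1)` is a weak shelling. -/
def IsWeakShelling (σ : ℕ → Finset V) (m : ℕ) : Prop :=
  ∀ j, 1 ≤ j → j < m → ∃ u ∈ σ j, IsSimplexC (indOn (cUnion σ j) ((σ j).erase u))

/-- `c` is the edge set of a cycle (graph cycle, length `≥ 3`). -/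
def IsCycleEdges (c : Finset (Finset V)) : Prop :=
  ∃ n : ℕ, 3 ≤ n ∧ ∃ f : ℕ → V, (∀ i j, i < n → j < n → f i = f j → i = j) ∧
    c = (Finset.range n).image (fun i => ({f i, f ((i + 1) % n)} : Finset V))

/-!
Induct along a facet ordering, `X_j = X_{j-1} ∪ Δ(σ_j)`. By Mayer–Vietoris over `ℤ/2`, if `A` and
`B` are `(d+1)`-Leray and `A ∩ B` is `d`-Leray, then `A ∪ B` is `(d+1)`-Leray, since taking induced
subcomplexes commutes with `∪` and `∩`. Simplices are cones, hence acyclic and `d`-Leray for every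
`d`. The intersection `X_{j-1} ∩ Δ(σ_j)` is the induced subcomplex `X_{j-1}[σ_j]`, hence
`M_≺(X_{j-1})`-Leray; when it is a simplex it is `d`-Leray for every `d`, and the bound does not
grow.
-/

open scoped symmDiff

section Chains

variable {α β : Type*} {X Y : Finset (Finset α)} {n : ℕ} {c d : Finset (Finset α)}

theorem IsNChain.mono (hXY : X ⊆ Y) (hc : IsNChain X n c) : IsNChain Y n c :=
  ⟨hc.1.trans hXY, hc.2⟩

variable [DecidableEq α] [DecidableEq β]

theorem IsNChain.inter (hX : IsNChain X n c) (hY : IsNChain Y n c) : IsNChain (X ∩ Y) n c :=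
  ⟨fun _ hs => mem_inter.2 ⟨hX.1 hs, hY.1 hs⟩, hX.2⟩

theorem IsNChain.symmDiff (hc : IsNChain X n c) (hd : IsNChain X n d) :
    IsNChain X n (c ∆ d) := by
  refine ⟨fun s hs => ?_, fun s hs => ?_⟩ <;>
    rcases mem_union.1 (symmDiff_subset_union hs) with h | h
  exacts [hc.1 h, hd.1 h, hc.2 s h, hd.2 s h]

theorem odd_card_symmDiff_iff (s t : Finset α) : Odd #(s ∆ t) ↔ ¬(Odd #s ↔ Odd #t) := by
  have hst := card_sdiff_add_card_inter s t
  have hts := card_sdiff_add_card_inter t s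
  rw [inter_comm] at hts
  rw [Finset.symmDiff_def, card_union_of_disjoint disjoint_sdiff_sdiff]
  simp only [Nat.odd_iff]
  omega

theorem filter_symmDiff (p : α → Prop) [DecidablePred p] (s t : Finset α) :
    (s ∆ t).filter p = s.filter p ∆ t.filter p := by
  ext x
  simp only [mem_filter, mem_symmDiff]
  tauto

theorem insert_eq_singleton_symmDiff {a : α} {s : Finset α} (h : a ∉ s) :
    insert a s = {a} ∆ s := by
  rw [symmDiff_eq_union (disjoint_singleton_left.2 h), insert_eq]

theorem map_empty_of_map_symmDiff {f : Finset α → Finset β}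
    (hf : ∀ a b, f (a ∆ b) = f a ∆ f b) : f ∅ = ∅ := by
  simpa using hf ∅ ∅

theorem eq_of_map_symmDiff {f g : Finset α → Finset β}
    (hf : ∀ a b, f (a ∆ b) = f a ∆ f b) (hg : ∀ a b, g (a ∆ b) = g a ∆ g b)
    (h : ∀ x, f {x} = g {x}) (s : Finset α) : f s = g s := by
  induction s using Finset.induction_on with
  | empty => rw [map_empty_of_map_symmDiff hf, map_empty_of_map_symmDiff hg]
  | insert x s hx ih => rw [insert_eq_singleton_symmDiff hx, hf, hg, h, ih]

end Chains

section Boundary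

theorem mem_bdry {c : Finset (Finset V)} {τ : Finset V} :
    τ ∈ bdry c ↔ Odd #{s ∈ c | τ ⊆ s ∧ #s = #τ + 1} := by
  simp [bdry]

theorem mem_bdry_singleton {s τ : Finset V} : τ ∈ bdry {s} ↔ τ ⊆ s ∧ #s = #τ + 1 := by
  rw [mem_bdry, filter_singleton]
  split_ifs with h <;> simp [h]

theorem bdry_empty : bdry (∅ : Finset (Finset V)) = ∅ := by
  ext
  simp [mem_bdry]

theorem bdry_symmDiff (c d : Finset (Finset V)) : bdry (c ∆ d) = bdry c ∆ bdry d := by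
  ext τ
  rw [mem_symmDiff, mem_bdry, mem_bdry, mem_bdry, filter_symmDiff, odd_card_symmDiff_iff]
  tauto

theorem even_card_intermediate_faces (ρ s : Finset V) :
    Even #{τ | (τ ⊆ s ∧ #s = #τ + 1) ∧ ρ ⊆ τ ∧ #τ = #ρ + 1} := by
  by_cases h : ρ ⊆ s ∧ #s = #ρ + 2
  · have himage : ({τ | (τ ⊆ s ∧ #s = #τ + 1) ∧ ρ ⊆ τ ∧ #τ = #ρ + 1} : Finset (Finset V)) =
        (s \ ρ).image (insert · ρ) := by
      ext τ
      simp only [mem_filter, mem_univ, true_and, mem_image, mem_sdiff]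
      constructor
      · rintro ⟨⟨hτs, hs⟩, hρτ, hτ⟩
        obtain ⟨v, hvρ, rfl⟩ := exists_eq_insert_iff.2 ⟨hρτ, hτ.symm⟩
        exact ⟨v, ⟨hτs (mem_insert_self v ρ), hvρ⟩, rfl⟩
      · rintro ⟨v, ⟨hvs, hvρ⟩, rfl⟩
        rw [card_insert_of_notMem hvρ]
        exact ⟨⟨insert_subset hvs h.1, by omega⟩, subset_insert v ρ, rfl⟩
    rw [himage, card_image_of_injOn fun x hx y _ hxy => (insert_inj (mem_sdiff.1 hx).2).1 hxy,
      card_sdiff_of_subset h.1, h.2]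
    exact ⟨1, by omega⟩
  · rw [card_eq_zero.2 (filter_eq_empty_iff.2 ?_)]
    · exact Even.zero
    rintro τ - ⟨⟨hτs, hs⟩, hρτ, hτ⟩
    exact h ⟨hρτ.trans hτs, by omega⟩

theorem bdry_bdry (c : Finset (Finset V)) : bdry (bdry c) = ∅ := by
  refine eq_of_map_symmDiff (f := fun c => bdry (bdry c)) (g := fun _ => ∅)
    (fun a b => by simp only [bdry_symmDiff]) (fun _ _ => by simp) (fun s => ?_) c
  ext ρ
  have hfaces : {τ ∈ bdry {s} | ρ ⊆ τ ∧ #τ = #ρ + 1} =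
      ({τ | (τ ⊆ s ∧ #s = #τ + 1) ∧ ρ ⊆ τ ∧ #τ = #ρ + 1} : Finset (Finset V)) := by
    ext τ
    simp [mem_bdry_singleton]
  rw [mem_bdry, hfaces]
  simpa using even_card_intermediate_faces ρ s

end Boundary

section Cone

/-- The cone with apex `v`, sending a face `s ∌ v` to `s ∪ {v}` and a face `s ∋ v` to zero. -/
def cone (v : V) (c : Finset (Finset V)) : Finset (Finset V) := {t | v ∈ t ∧ t.erase v ∈ c}

variable {v : V} {s : Finset V}

theorem mem_cone {c : Finset (Finset V)} {t : Finset V} :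
    t ∈ cone v c ↔ v ∈ t ∧ t.erase v ∈ c := by
  simp [cone]

theorem cone_empty (v : V) : cone v ∅ = ∅ := by
  ext
  simp [mem_cone]

theorem cone_symmDiff (v : V) (c d : Finset (Finset V)) :
    cone v (c ∆ d) = cone v c ∆ cone v d := by
  ext
  simp only [mem_cone, mem_symmDiff]
  tauto

theorem cone_singleton_of_mem (hv : v ∈ s) : cone v {s} = ∅ := by
  ext t
  simp only [mem_cone, mem_singleton, notMem_empty, iff_false, not_and]
  rintro - rfl
  exact notMem_erase v t hv

theorem cone_singleton_of_notMem (hv : v ∉ s) : cone v {s} = {insert v s} := by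
  ext t
  rw [mem_cone, mem_singleton, mem_singleton]
  constructor
  · rintro ⟨hvt, rfl⟩
    exact (insert_erase hvt).symm
  · rintro rfl
    exact ⟨mem_insert_self v s, erase_insert hv⟩

theorem bdry_cone_symmDiff_cone_bdry_singleton (v : V) (s : Finset V) :
    bdry (cone v {s}) ∆ cone v (bdry {s}) = {s} := by
  ext τ
  by_cases hv : v ∈ s
  · rw [cone_singleton_of_mem hv, bdry_empty, ← bot_eq_empty, bot_symmDiff, mem_cone,
      mem_bdry_singleton, mem_singleton]
    constructor
    · rintro ⟨hvτ, hτs, hs⟩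
      refine eq_of_subset_of_card_le ?_ (by rw [← card_erase_add_one hvτ]; omega)
      rwa [← insert_eq_of_mem hv, subset_insert_iff]
    · rintro rfl
      exact ⟨hv, erase_subset v τ, (card_erase_add_one hv).symm⟩
  · rw [cone_singleton_of_notMem hv, mem_symmDiff, mem_cone, mem_bdry_singleton,
      mem_bdry_singleton, subset_insert_iff, card_insert_of_notMem hv, mem_singleton]
    by_cases hvτ : v ∈ τ
    · have hτs : τ ≠ s := fun h => hv (h ▸ hvτ)
      have hcard : #s + 1 = #τ + 1 ↔ #s = #(τ.erase v) + 1 := by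
        rw [← card_erase_add_one hvτ]
        omega
      simp only [hvτ, true_and, hτs, iff_false, hcard]
      tauto
    · rw [erase_eq_of_notMem hvτ]
      simp only [hvτ, false_and, not_false_eq_true, and_true, or_false]
      constructor
      · rintro ⟨hτs, hs⟩
        exact eq_of_subset_of_card_le hτs (by omega)
      · rintro rfl
        exact ⟨subset_rfl, rfl⟩

theorem bdry_cone_symmDiff_cone_bdry (v : V) (c : Finset (Finset V)) :
    bdry (cone v c) ∆ cone v (bdry c) = c :=
  eq_of_map_symmDiff (f := fun c => bdry (cone v c) ∆ cone v (bdry c)) (g := id)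
    (fun a b => by simp only [cone_symmDiff, bdry_symmDiff, symmDiff_symmDiff_symmDiff_comm])
    (fun _ _ => rfl) (bdry_cone_symmDiff_cone_bdry_singleton v) c

end Cone

section Homology

def HomologyVanishes (X : Finset (Finset V)) (n : ℕ) : Prop :=
  ∀ c, IsNCycle X n c → IsNBdry X n c

theorem exists_of_mem_bdry {c : Finset (Finset V)} {τ : Finset V} (h : τ ∈ bdry c) :
    ∃ s ∈ c, τ ⊆ s ∧ #s = #τ + 1 := by
  obtain ⟨s, hs⟩ := card_pos.1 (mem_bdry.1 h).pos
  exact ⟨s, (mem_filter.1 hs).1, (mem_filter.1 hs).2⟩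

theorem IsNChain.bdry {X c : Finset (Finset V)} {n : ℕ} (hX : IsComplex X)
    (hc : IsNChain X (n + 1) c) : IsNChain X n (bdry c) := by
  refine ⟨fun τ hτ => ?_, fun τ hτ => ?_⟩ <;>
    obtain ⟨s, hs, hτs, hcard⟩ := exists_of_mem_bdry hτ
  · exact hX s (hc.1 hs) τ hτs
  · have := hc.2 s hs
    omega

theorem homologyVanishes_powerset (τ : Finset V) (n : ℕ) : HomologyVanishes τ.powerset n := by
  rintro c ⟨hc, hcycle⟩
  rcases c.eq_empty_or_nonempty with rfl | ⟨s, hs⟩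
  · exact ⟨∅, ⟨empty_subset _, by simp⟩, bdry_empty⟩
  obtain ⟨v, hv⟩ : s.Nonempty := card_pos.1 (by rw [hc.2 s hs]; omega)
  have hvτ : v ∈ τ := mem_powerset.1 (hc.1 hs) hv
  refine ⟨cone v c, ⟨fun t ht => ?_, fun t ht => ?_⟩, ?_⟩
  · rw [mem_cone] at ht
    rw [mem_powerset, ← insert_erase ht.1]
    exact insert_subset hvτ (mem_powerset.1 (hc.1 ht.2))
  · rw [mem_cone] at ht
    rw [← card_erase_add_one ht.1, hc.2 _ ht.2]
  · have hcone := bdry_cone_symmDiff_cone_bdry v c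
    rwa [hcycle, cone_empty, ← bot_eq_empty, symmDiff_bot] at hcone

theorem HomologyVanishes.union {A B : Finset (Finset V)} {n : ℕ} (hA : IsComplex A)
    (hB : IsComplex B) (hAn : HomologyVanishes A (n + 1)) (hBn : HomologyVanishes B (n + 1))
    (hABn : HomologyVanishes (A ∩ B) n) : HomologyVanishes (A ∪ B) (n + 1) := by
  rintro c ⟨hc, hcycle⟩
  set a := c.filter (· ∈ A)
  set b := c.filter (· ∉ A)
  have hab : a ∆ b = c := by
    ext s
    simp only [a, b, mem_symmDiff, mem_filter]
    tauto
  have ha : IsNChain A (n + 1) a :=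
    ⟨fun s hs => (mem_filter.1 hs).2, fun s hs => hc.2 s (mem_filter.1 hs).1⟩
  have hb : IsNChain B (n + 1) b :=
    ⟨fun s hs => (mem_union.1 (hc.1 (mem_filter.1 hs).1)).resolve_left (mem_filter.1 hs).2,
      fun s hs => hc.2 s (mem_filter.1 hs).1⟩
  have hbdry : bdry a = bdry b := symmDiff_eq_empty.1 (by rw [← bdry_symmDiff, hab, hcycle])
  obtain ⟨e, he, hbdry_e⟩ :=
    hABn (bdry a) ⟨(ha.bdry hA).inter (hbdry ▸ hb.bdry hB), bdry_bdry a⟩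
  obtain ⟨f, hf, hbdry_f⟩ := hAn (a ∆ e)
    ⟨ha.symmDiff (he.mono inter_subset_left), by rw [bdry_symmDiff, hbdry_e, symmDiff_self]; rfl⟩
  obtain ⟨g, hg, hbdry_g⟩ := hBn (b ∆ e)
    ⟨hb.symmDiff (he.mono inter_subset_right),
      by rw [bdry_symmDiff, hbdry_e, hbdry, symmDiff_self]; rfl⟩
  refine ⟨f ∆ g, (hf.mono subset_union_left).symmDiff (hg.mono subset_union_right), ?_⟩
  rw [bdry_symmDiff, hbdry_f, hbdry_g, symmDiff_symmDiff_symmDiff_comm, symmDiff_self,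
    symmDiff_bot, hab]

end Homology

section Complexes

variable {α : Type*}

theorem isComplex_powerset (τ : Finset α) : IsComplex τ.powerset :=
  fun _ hs _ hts => mem_powerset.2 (hts.trans (mem_powerset.1 hs))

variable [DecidableEq α]

theorem indOn_union (A B : Finset (Finset α)) (W : Finset α) :
    indOn (A ∪ B) W = indOn A W ∪ indOn B W :=
  filter_union _ _ _

theorem indOn_inter (A B : Finset (Finset α)) (W : Finset α) :
    indOn (A ∩ B) W = indOn A W ∩ indOn B W :=
  filter_inter_distrib _ _ _

theorem indOn_indOn (A : Finset (Finset α)) (U W : Finset α) :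
    indOn (indOn A U) W = indOn A (U ∩ W) := by
  ext s
  simp only [indOn, mem_filter, subset_inter_iff, and_assoc]

theorem indOn_powerset (τ W : Finset α) : indOn τ.powerset W = (τ ∩ W).powerset := by
  ext s
  simp only [indOn, mem_filter, mem_powerset, subset_inter_iff]

theorem inter_powerset_eq_indOn (A : Finset (Finset α)) (τ : Finset α) :
    A ∩ τ.powerset = indOn A τ := by
  ext s
  simp only [indOn, mem_inter, mem_filter, mem_powerset]

theorem IsComplex.indOn {A : Finset (Finset α)} (hA : IsComplex A) (W : Finset α) :
    IsComplex (indOn A W) := by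
  intro s hs t hts
  rw [_root_.indOn, mem_filter] at hs ⊢
  exact ⟨hA s hs.1 t hts, hts.trans hs.2⟩

theorem isComplex_cUnion (σ : ℕ → Finset α) (j : ℕ) : IsComplex (cUnion σ j) := by
  intro s hs t hts
  obtain ⟨i, hi, hsi⟩ := mem_biUnion.1 hs
  exact mem_biUnion.2 ⟨i, hi, isComplex_powerset _ s hsi t hts⟩

theorem cUnion_one (σ : ℕ → Finset α) : cUnion σ 1 = (σ 0).powerset := by
  simp [cUnion]

theorem cUnion_succ (σ : ℕ → Finset α) (j : ℕ) :
    cUnion σ (j + 1) = cUnion σ j ∪ (σ j).powerset := by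
  rw [cUnion, cUnion, range_add_one, biUnion_insert, union_comm]

theorem Mval_pos (σ : ℕ → Finset α) (j : ℕ) : 0 < Mval σ j := by
  induction j with
  | zero => simp [Mval]
  | succ j ih => rw [Mval]; omega

theorem Mval_succ_of_isSimplexC {σ : ℕ → Finset α} {j : ℕ}
    (h : IsSimplexC (cUnion σ (j + 1) ∩ (σ (j + 1)).powerset)) : Mval σ (j + 1) = Mval σ j := by
  simp [Mval, h]

theorem Mval_succ_of_not_isSimplexC {σ : ℕ → Finset α} {j : ℕ}
    (h : ¬IsSimplexC (cUnion σ (j + 1) ∩ (σ (j + 1)).powerset)) :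
    Mval σ (j + 1) = Mval σ j + 1 := by
  simp [Mval, h]

end Complexes

section Leray

variable {X : Finset (Finset V)} {d : ℕ}

theorem IsLeray.mono {d' : ℕ} (h : d ≤ d') (hX : IsLeray X d) : IsLeray X d' :=
  fun W i hi => hX W i (h.trans hi)

theorem IsLeray.indOn (hX : IsLeray X d) (U : Finset V) : IsLeray (indOn X U) d := by
  intro W i hi
  rw [indOn_indOn]
  exact hX (U ∩ W) i hi

theorem isLeray_powerset (τ : Finset V) (d : ℕ) : IsLeray τ.powerset d := by
  intro W i _
  rw [indOn_powerset]
  exact homologyVanishes_powerset _ i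

theorem IsLeray.union {A B : Finset (Finset V)} (hA : IsComplex A) (hB : IsComplex B)
    (hAd : IsLeray A (d + 1)) (hBd : IsLeray B (d + 1)) (hABd : IsLeray (A ∩ B) d) :
    IsLeray (A ∪ B) (d + 1) := by
  intro W i hi
  obtain ⟨n, rfl⟩ : ∃ n, i = n + 1 := ⟨i - 1, by omega⟩
  rw [indOn_union]
  refine HomologyVanishes.union (hA.indOn W) (hB.indOn W) (hAd W _ hi) (hBd W _ hi) ?_
  rw [← indOn_inter]
  exact hABd W n (by omega)

theorem isLeray_cUnion (σ : ℕ → Finset V) (j : ℕ) : IsLeray (cUnion σ (j + 1)) (Mval σ j) := by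
  induction j with
  | zero => rw [cUnion_one]; exact isLeray_powerset _ _
  | succ j ih =>
    rw [cUnion_succ]
    by_cases hS : IsSimplexC (cUnion σ (j + 1) ∩ (σ (j + 1)).powerset)
    · obtain ⟨d, hd⟩ : ∃ d, Mval σ j = d + 1 :=
        ⟨_, (Nat.succ_pred_eq_of_pos (Mval_pos σ j)).symm⟩
      rw [Mval_succ_of_isSimplexC hS, hd]
      rw [hd] at ih
      obtain ⟨τ, hτ⟩ := hS
      exact ih.union (isComplex_cUnion σ _) (isComplex_powerset _) (isLeray_powerset _ _)
        (hτ ▸ isLeray_powerset τ d)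
    · rw [Mval_succ_of_not_isSimplexC hS]
      refine (ih.mono (Nat.le_succ _)).union (isComplex_cUnion σ _) (isComplex_powerset _)
        (isLeray_powerset _ _) ?_
      rw [inter_powerset_eq_indOn]
      exact ih.indOn _

end Leray

section FacetEnumerations

variable {X : Finset (Finset V)}

theorem exists_facet_superset {s : Finset V} (hs : s ∈ X) : ∃ t ∈ facetsOf X, s ⊆ t := by
  obtain ⟨t, hst, htX, hmax⟩ := X.exists_le_maximal hs
  exact ⟨t, mem_filter.2 ⟨htX, fun u huX htu => le_antisymm htu (hmax huX htu)⟩, hst⟩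

theorem cUnion_of_isFacetEnum (hX : IsComplex X) {m : ℕ} {σ : ℕ → Finset V}
    (he : IsFacetEnum X m σ) : cUnion σ m = X := by
  ext s
  rw [cUnion, mem_biUnion]
  constructor
  · rintro ⟨i, hi, hsi⟩
    exact hX _ (mem_filter.1 (he.1 i (mem_range.1 hi))).1 s (mem_powerset.1 hsi)
  · intro hs
    obtain ⟨t, htf, hst⟩ := exists_facet_superset hs
    obtain ⟨i, hi, rfl⟩ := he.2.1 t htf
    exact ⟨i, mem_range.2 hi, mem_powerset.2 hst⟩

theorem exists_isFacetEnum (h : (facetsOf X).Nonempty) : ∃ m σ, 0 < m ∧ IsFacetEnum X m σ := by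
  set l := (facetsOf X).toList
  have hget : ∀ i (hi : i < l.length), l.getD i ∅ = l[i] :=
    fun i hi => List.getD_eq_getElem _ _ hi
  refine ⟨l.length, fun i => l.getD i ∅, by simpa [l] using h, fun i hi => ?_, fun s hs => ?_,
    fun i j hi hj hij => ?_⟩
  · simp only [hget i hi]
    exact mem_toList.1 (List.getElem_mem hi)
  · obtain ⟨i, hi, rfl⟩ := List.mem_iff_getElem.1 (mem_toList.2 hs)
    exact ⟨i, hi, hget i hi⟩
  · simp only [hget i hi, hget j hj] at hij
    exact (nodup_toList _).getElem_inj_iff.1 hij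

theorem lerayNum_le_Mval (hX : IsComplex X) {m : ℕ} {σ : ℕ → Finset V} (hm : 0 < m)
    (he : IsFacetEnum X m σ) : lerayNum X ≤ Mval σ (m - 1) := by
  have hL := isLeray_cUnion σ (m - 1)
  rw [Nat.sub_add_cancel hm, cUnion_of_isFacetEnum hX he] at hL
  exact Nat.sInf_le hL

end FacetEnumerations

/-- `L(X) ≤ M(X)` for every complex with at least one facet. -/
theorem leray_le_M (X : Finset (Finset V)) (hX : IsComplex X)
    (h : (facetsOf X).Nonempty) :
    lerayNum X ≤ Mnum X := by
  obtain ⟨m, σ, hm, he⟩ := exists_isFacetEnum h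
  refine le_csInf ⟨_, m, σ, hm, he, rfl⟩ ?_
  rintro _ ⟨m', σ', hm', he', rfl⟩
  exact lerayNum_le_Mval hX hm' he'
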